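/- For an integrable random variable X, λ ∈ (0,1), β₁,...,βₙ ∈ (0,1) with β = Σᵢβᵢ ∈ (0,1), and g_{λ,i} as above, the distortion risk measure representation holds: λ·E[X] + (1-λ)·R_{[0,βᵢ]∪[1-β+βᵢ,1]}(X) = ∫_0^1 q_{1-s}^-(X) dg_{λ,i}(s), where the integral is the Lebesgue–Stieltjes integral against g_{λ,i}. -/

import Mathlib

open MeasureTheory Set Filter

/-- Left `u`-quantile of a random variable `X` under measure `μ`. -/
noncomputable def leftQuantile {Ω : Type*} [MeasurableSpace Ω] (μ : Measure Ω)
    (X : Ω → ℝ) (u : ℝ) : ℝ :=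
  sInf {x : ℝ | u ≤ (μ {ω | X ω ≤ x}).toReal}

/-- Averaged quantile functional `R_I`. -/
noncomputable def avgQuantile {Ω : Type*} [MeasurableSpace Ω] (μ : Measure Ω)
    (X : Ω → ℝ) (I : Set ℝ) : ℝ :=
  (volume I).toReal⁻¹ * ∫ u in I, leftQuantile μ X u
/-- The inverse-S-shaped distortion function `g_{λ,i}` of the paper, with
`B = β₁ + ⋯ + βₙ` and `bi = βᵢ`. -/
noncomputable def distortion (lam B bi : ℝ) : ℝ → ℝ := fun s =>
  lam * s + ((1 - lam) / B) *
    (Set.indicator (Set.Ico 0 (1 - bi)) (fun s' => min s' (B - bi)) s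
      + Set.indicator (Set.Icc (1 - bi) 1) (fun s' => s' - 1 + B) s)

/-!
The left quantile function `u ↦ q_u^-(X)` pushes Lebesgue measure on `(0, 1]` forward to the law
of `X`: right-continuity of the distribution function `F` gives the Galois connection
`q_u^-(X) ≤ x ↔ u ≤ F x` for `u ∈ (0, 1)`. Hence the quantile function is integrable with
integral `E[X]`.

On `[0, 1]` the distortion `g_{λ,i}` is `λ s` plus `(1 - λ) / β` times the clamps of `s` to
`[0, β - βᵢ]` and to `[1 - βᵢ, 1]`, so its Lebesgue–Stieltjes measure there is `λ` times Lebesgue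
measure plus `(1 - λ) / β` times Lebesgue measure on `(0, β - βᵢ]` and on `(1 - βᵢ, 1]`. The
substitution `u = 1 - s` turns these two pieces into the integrals of the quantile function over
`[1 - β + βᵢ, 1]` and `[0, βᵢ]`, whose lengths add up to `β`.
-/

open ProbabilityTheory

namespace StieltjesFunction

theorem sInf_le_iff (F : StieltjesFunction ℝ) {u y : ℝ} (hne : ∃ x, u ≤ F x)
    (hlow : ∃ x, F x < u) : sInf {x | u ≤ F x} ≤ y ↔ u ≤ F y := by
  obtain ⟨x₀, hx₀⟩ := hlow
  have hbdd : BddBelow {x | u ≤ F x} :=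
    ⟨x₀, fun x hx => le_of_not_gt fun hlt => (hx₀.trans_le hx).not_ge (F.mono hlt.le)⟩
  have hmem : u ≤ F (sInf {x | u ≤ F x}) := by
    refine ge_of_tendsto ((F.right_continuous _).mono Ioi_subset_Ici_self) ?_
    filter_upwards [self_mem_nhdsWithin] with x hx
    obtain ⟨y, hy, hyx⟩ := exists_lt_of_csInf_lt hne hx
    exact le_trans hy (F.mono hyx.le)
  exact ⟨fun h => hmem.trans (F.mono h), fun h => csInf_le hbdd h⟩

def clamp (a b : ℝ) : StieltjesFunction ℝ where
  toFun x := max a (min x b)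
  mono' _ _ h := max_le_max le_rfl (min_le_min h le_rfl)
  right_continuous' _ :=
    (continuous_const.max (continuous_id.min continuous_const)).continuousWithinAt

theorem smul_apply (c : NNReal) (F : StieltjesFunction ℝ) (x : ℝ) : (c • F) x = c * F x := rfl

theorem clamp_apply (a b x : ℝ) : clamp a b x = max a (min x b) := rfl

theorem measure_clamp (a b : ℝ) : (clamp a b).measure = volume.restrict (Ioc a b) := by
  refine Measure.ext_of_Ioc _ _ fun c d _ => ?_
  rw [measure_Ioc, Measure.restrict_apply measurableSet_Ioc, Ioc_inter_Ioc, Real.volume_Ioc,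
    clamp_apply, clamp_apply]
  rcases le_total (d ⊓ b) (c ⊔ a) with h | h
  · rw [ENNReal.ofReal_of_nonpos (sub_nonpos.2 h), ENNReal.ofReal_of_nonpos (by grind)]
  · congr 1
    grind

theorem measure_restrict_Ioc_eq_of_sub_eq (F G : StieltjesFunction ℝ) {a b : ℝ}
    (h : ∀ x ∈ Icc a b, ∀ y ∈ Icc a b, F y - F x = G y - G x) :
    F.measure.restrict (Ioc a b) = G.measure.restrict (Ioc a b) := by
  refine Measure.ext_of_Ioc _ _ fun c d _ => ?_
  rw [Measure.restrict_apply measurableSet_Ioc, Measure.restrict_apply measurableSet_Ioc,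
    Ioc_inter_Ioc]
  rcases le_or_gt (c ⊔ a) (d ⊓ b) with hle | hlt
  · have hca : c ⊔ a ∈ Icc a b := ⟨le_sup_right, hle.trans inf_le_right⟩
    have hdb : d ⊓ b ∈ Icc a b := ⟨le_sup_right.trans hle, inf_le_right⟩
    rw [measure_Ioc, measure_Ioc, h _ hca _ hdb]
  · simp [Ioc_eq_empty (not_lt.2 hlt.le)]

end StieltjesFunction

open StieltjesFunction

theorem distortion_sub_distortion {lam B bi : ℝ} (hbiB : bi ≤ B) (hB : B ≤ 1)
    {x y : ℝ} (hx : x ∈ Icc 0 1) (hy : y ∈ Icc 0 1) :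
    distortion lam B bi y - distortion lam B bi x =
      lam * (y - x) + (1 - lam) / B * (clamp 0 (B - bi) y - clamp 0 (B - bi) x)
        + (1 - lam) / B * (clamp (1 - bi) 1 y - clamp (1 - bi) 1 x) := by
  have key : ∀ s ∈ Icc (0 : ℝ) 1, distortion lam B bi s =
      lam * s + (1 - lam) / B * (clamp 0 (B - bi) s + (clamp (1 - bi) 1 s - (1 - bi))) := by
    rintro s ⟨hs0, hs1⟩
    simp only [distortion, clamp_apply]
    congr 2
    rcases lt_or_ge s (1 - bi) with h | h
    · rw [indicator_of_mem (show s ∈ Ico 0 (1 - bi) from ⟨hs0, h⟩),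
        indicator_of_notMem (fun hs => h.not_ge hs.1)]
      grind
    · rw [indicator_of_notMem (fun hs => hs.2.not_ge h),
        indicator_of_mem (show s ∈ Icc (1 - bi) 1 from ⟨h, hs1⟩)]
      grind
  rw [key x hx, key y hy]
  ring

theorem measure_restrict_distortion {lam B bi : ℝ} (hlam : lam ∈ Icc 0 1) (hbi : 0 ≤ bi)
    (hbiB : bi ≤ B) (hB : B ≤ 1) (G : StieltjesFunction ℝ)
    (hG : ∀ s ∈ Icc 0 1, G s = distortion lam B bi s) :
    G.measure.restrict (Ioc 0 1) = lam.toNNReal • volume.restrict (Ioc 0 1)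
      + ((1 - lam) / B).toNNReal • volume.restrict (Ioc 0 (B - bi))
      + ((1 - lam) / B).toNNReal • volume.restrict (Ioc (1 - bi) 1) := by
  have hc : 0 ≤ (1 - lam) / B := div_nonneg (by linarith [hlam.2]) (by linarith)
  set H := lam.toNNReal • StieltjesFunction.id + ((1 - lam) / B).toNNReal • clamp 0 (B - bi)
    + ((1 - lam) / B).toNNReal • clamp (1 - bi) 1 with hH
  have hGH : G.measure.restrict (Ioc 0 1) = H.measure.restrict (Ioc 0 1) := by
    refine measure_restrict_Ioc_eq_of_sub_eq G H fun x hx y hy => ?_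
    rw [hG x hx, hG y hy, distortion_sub_distortion hbiB hB hx hy]
    simp only [hH, StieltjesFunction.add_apply, StieltjesFunction.smul_apply,
      StieltjesFunction.id_apply, id, Real.coe_toNNReal _ hlam.1, Real.coe_toNNReal _ hc]
    ring
  rw [hGH, measure_add, measure_add, StieltjesFunction.measure_smul,
    StieltjesFunction.measure_smul, StieltjesFunction.measure_smul, ← Real.volume_eq_stieltjes_id,
    measure_clamp, measure_clamp, Measure.restrict_add, Measure.restrict_add,
    Measure.restrict_smul, Measure.restrict_smul, Measure.restrict_smul,
    Measure.restrict_restrict measurableSet_Ioc, Measure.restrict_restrict measurableSet_Ioc,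
    inter_eq_right.2 (Ioc_subset_Ioc le_rfl (by linarith)),
    inter_eq_right.2 (Ioc_subset_Ioc (by linarith) le_rfl)]

section Quantile

variable {Ω : Type*} [MeasurableSpace Ω] {μ : Measure Ω} [IsProbabilityMeasure μ] {X : Ω → ℝ}

theorem leftQuantile_le_iff (hX : AEMeasurable X μ) {u : ℝ} (hu : u ∈ Ioo 0 1) (x : ℝ) :
    leftQuantile μ X u ≤ x ↔ u ≤ (μ {ω | X ω ≤ x}).toReal := by
  have := Measure.isProbabilityMeasure_map hX
  have hcdf : ∀ y, (μ {ω | X ω ≤ y}).toReal = cdf (μ.map X) y := fun y => by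
    rw [cdf_eq_real, measureReal_def, Measure.map_apply_of_aemeasurable hX measurableSet_Iic]
    rfl
  simp only [leftQuantile, hcdf]
  exact (cdf (μ.map X)).sInf_le_iff
    ((tendsto_cdf_atTop _).eventually (eventually_ge_nhds hu.2)).exists
    ((tendsto_cdf_atBot _).eventually (eventually_lt_nhds hu.1)).exists

-- Outside `(0, 1)` the set in `leftQuantile` is empty or unbounded below and `sInf` returns `0`.
theorem monotoneOn_leftQuantile (hX : AEMeasurable X μ) :
    MonotoneOn (leftQuantile μ X) (Ioo 0 1) := fun _ hu _ hv huv =>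
  (leftQuantile_le_iff hX hu _).2 (huv.trans ((leftQuantile_le_iff hX hv _).1 le_rfl))

theorem aemeasurable_leftQuantile (hX : AEMeasurable X μ) :
    AEMeasurable (leftQuantile μ X) (volume.restrict (Ioc 0 1)) := by
  rw [← restrict_Ioo_eq_restrict_Ioc]
  exact aemeasurable_restrict_of_monotoneOn measurableSet_Ioo (monotoneOn_leftQuantile hX)

theorem map_leftQuantile_volume (hX : AEMeasurable X μ) :
    (volume.restrict (Ioc 0 1)).map (leftQuantile μ X) = μ.map X := by
  have := Measure.isProbabilityMeasure_map hX
  refine Measure.ext_of_Iic _ _ fun x => ?_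
  have hpre : leftQuantile μ X ⁻¹' Iic x =ᵐ[volume.restrict (Ioc 0 1)]
      Iic (μ {ω | X ω ≤ x}).toReal := by
    rw [← restrict_Ioo_eq_restrict_Ioc]
    filter_upwards [ae_restrict_mem measurableSet_Ioo] with u hu
    exact propext (leftQuantile_le_iff hX hu x)
  rw [Measure.map_apply_of_aemeasurable (aemeasurable_leftQuantile hX) measurableSet_Iic,
    measure_congr hpre, Measure.restrict_apply measurableSet_Iic, inter_comm, Ioc_inter_Iic,
    Real.volume_Ioc, sub_zero, min_eq_right (ENNReal.toReal_le_of_le_ofReal zero_le_one ?_),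
    ENNReal.ofReal_toReal (measure_ne_top _ _),
    Measure.map_apply_of_aemeasurable hX measurableSet_Iic]
  · rfl
  · simpa using prob_le_one

theorem integrableOn_leftQuantile (hX : Integrable X μ) :
    IntegrableOn (leftQuantile μ X) (Ioc 0 1) := by
  have h : Integrable id (μ.map X) :=
    (integrable_map_measure aestronglyMeasurable_id hX.aemeasurable).2 hX
  rw [← map_leftQuantile_volume hX.aemeasurable] at h
  exact (integrable_map_measure aestronglyMeasurable_id
    (aemeasurable_leftQuantile hX.aemeasurable)).1 h

theorem integral_leftQuantile (hX : AEMeasurable X μ) :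
    ∫ u in Ioc 0 1, leftQuantile μ X u = ∫ ω, X ω ∂μ := by
  refine (integral_map (aemeasurable_leftQuantile hX) aestronglyMeasurable_id).symm.trans ?_
  rw [map_leftQuantile_volume hX]
  exact integral_map hX aestronglyMeasurable_id

end Quantile

theorem setIntegral_Ioc_comp_sub_left {E : Type*} [NormedAddCommGroup E] [NormedSpace ℝ E]
    (f : ℝ → E) (c : ℝ) {a b : ℝ} (hab : a ≤ b) :
    ∫ s in Ioc a b, f (c - s) = ∫ u in Ioc (c - b) (c - a), f u := by
  rw [← intervalIntegral.integral_of_le hab, intervalIntegral.integral_comp_sub_left,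
    intervalIntegral.integral_of_le (by linarith)]

theorem MeasureTheory.IntegrableOn.comp_sub_left_Ioc {E : Type*} [NormedAddCommGroup E]
    {f : ℝ → E} {a b c : ℝ} (hab : a ≤ b) (hf : IntegrableOn f (Ioc (c - b) (c - a))) :
    IntegrableOn (fun s => f (c - s)) (Ioc a b) := by
  have := ((intervalIntegrable_iff_integrableOn_Ioc_of_le (by linarith)).2 hf).comp_sub_left c
  rw [sub_sub_cancel, sub_sub_cancel] at this
  exact (intervalIntegrable_iff_integrableOn_Ioc_of_le hab).1 this.symm

theorem avgQuantile_Icc_union_Icc {Ω : Type*} [MeasurableSpace Ω] {μ : Measure Ω} {X : Ω → ℝ}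
    {a b c d : ℝ} (hab : a ≤ b) (hbc : b < c) (hcd : c ≤ d)
    (hq : IntegrableOn (leftQuantile μ X) (Ioc a d)) :
    avgQuantile μ X (Icc a b ∪ Icc c d) = (b - a + (d - c))⁻¹ *
      ((∫ u in Ioc a b, leftQuantile μ X u) + ∫ u in Ioc c d, leftQuantile μ X u) := by
  have hdisj : Disjoint (Icc a b) (Icc c d) :=
    disjoint_left.2 fun x hab hcd => (hab.2.trans_lt hbc).not_ge hcd.1
  have hab' : IntegrableOn (leftQuantile μ X) (Icc a b) :=
    (integrableOn_Icc_iff_integrableOn_Ioc).2 (hq.mono_set (Ioc_subset_Ioc le_rfl (by linarith)))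
  have hcd' : IntegrableOn (leftQuantile μ X) (Icc c d) :=
    (integrableOn_Icc_iff_integrableOn_Ioc).2 (hq.mono_set (Ioc_subset_Ioc (by linarith) le_rfl))
  rw [avgQuantile, measure_union hdisj measurableSet_Icc, Real.volume_Icc, Real.volume_Icc,
    ← ENNReal.ofReal_add (by linarith) (by linarith), ENNReal.toReal_ofReal (by linarith),
    setIntegral_union hdisj measurableSet_Icc hab' hcd', integral_Icc_eq_integral_Ioc,
    integral_Icc_eq_integral_Ioc]

theorem setIntegral_comp_one_sub_distortion_measure {lam B bi : ℝ} (hlam : lam ∈ Icc 0 1)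
    (hbi : 0 ≤ bi) (hbiB : bi ≤ B) (hB : B ≤ 1) (G : StieltjesFunction ℝ)
    (hG : ∀ s ∈ Icc 0 1, G s = distortion lam B bi s) {f : ℝ → ℝ}
    (hf : IntegrableOn f (Ioc 0 1)) :
    ∫ s in Ioc 0 1, f (1 - s) ∂G.measure = lam * (∫ u in Ioc 0 1, f u)
      + (1 - lam) / B * ((∫ u in Ioc 0 bi, f u) + ∫ u in Ioc (1 - B + bi) 1, f u) := by
  have hf' : IntegrableOn (fun s => f (1 - s)) (Ioc 0 1) :=
    IntegrableOn.comp_sub_left_Ioc zero_le_one (by simpa using hf)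
  have hK : IntegrableOn (fun s => f (1 - s)) (Ioc 0 (B - bi)) :=
    hf'.mono_set (Ioc_subset_Ioc le_rfl (by linarith))
  have hL : IntegrableOn (fun s => f (1 - s)) (Ioc (1 - bi) 1) :=
    hf'.mono_set (Ioc_subset_Ioc (by linarith) le_rfl)
  have hc : 0 ≤ (1 - lam) / B := div_nonneg (by linarith [hlam.2]) (hbi.trans hbiB)
  rw [measure_restrict_distortion hlam hbi hbiB hB G hG,
    integral_add_measure (hf'.smul_measure_nnreal.add_measure hK.smul_measure_nnreal)
      hL.smul_measure_nnreal,
    integral_add_measure hf'.smul_measure_nnreal hK.smul_measure_nnreal,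
    integral_smul_nnreal_measure, integral_smul_nnreal_measure, integral_smul_nnreal_measure,
    setIntegral_Ioc_comp_sub_left _ _ zero_le_one,
    setIntegral_Ioc_comp_sub_left _ _ (by linarith : 0 ≤ B - bi),
    setIntegral_Ioc_comp_sub_left _ _ (by linarith : 1 - bi ≤ 1)]
  simp only [sub_self, sub_zero, sub_sub_cancel, NNReal.smul_def, smul_eq_mul,
    Real.coe_toNNReal _ hlam.1, Real.coe_toNNReal _ hc]
  rw [show 1 - (B - bi) = 1 - B + bi by ring]
  ring

theorem stmt13 {Ω : Type*} [MeasurableSpace Ω] (μ : Measure Ω) [IsProbabilityMeasure μ]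
    (X : Ω → ℝ) (hX : Integrable X μ)
    (lam : ℝ) (hlam : lam ∈ Set.Ioo (0 : ℝ) 1)
    (n : ℕ) (β : Fin n → ℝ) (hβ : ∀ i, β i ∈ Set.Ioo (0 : ℝ) 1)
    (B : ℝ) (hBdef : B = ∑ i, β i) (hB : B ∈ Set.Ioo (0 : ℝ) 1) (i : Fin n)
    (G : StieltjesFunction ℝ) (hG : ∀ s ∈ Set.Icc (0 : ℝ) 1, G s = distortion lam B (β i) s) :
    lam * ∫ ω, X ω ∂μ
      + (1 - lam) * avgQuantile μ X (Set.Icc 0 (β i) ∪ Set.Icc (1 - B + β i) 1)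
      = ∫ s in Set.Ioc (0 : ℝ) 1, leftQuantile μ X (1 - s) ∂G.measure := by
  have hbiB : β i ≤ B :=
    hBdef ▸ Finset.single_le_sum (fun j _ => (hβ j).1.le) (Finset.mem_univ i)
  obtain ⟨hbi0, -⟩ := hβ i
  obtain ⟨hB0, hB1⟩ := hB
  have hq := integrableOn_leftQuantile hX
  rw [setIntegral_comp_one_sub_distortion_measure ⟨hlam.1.le, hlam.2.le⟩ hbi0.le hbiB hB1.le
      G hG hq, integral_leftQuantile hX.aemeasurable,
    avgQuantile_Icc_union_Icc hbi0.le (by linarith) (by linarith) hq,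
    show β i - 0 + (1 - (1 - B + β i)) = B by ring]
  field_simp
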